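/- arXiv:2312.10418 — 11 statements merged into one kernel-verified Lean document; each statement's English description precedes it below -/
import Mathlib

section
/- F(γ*) = 0; that is, the minimum over all s ∈ S of N s − γ* · D s equals zero, where γ* is the minimum of the ratios N s / D s. -/
open Finset

/-- F(γ*) = 0, where γ* = min_{s ∈ S} N s / D s and
F(γ) = min_{s ∈ S} (N s − γ · D s). -/
theorem dinkelbach_value_at_opt_eq_zero
    {S : Type*} [Fintype S] [Nonempty S] (N D : S → ℝ) (hD : ∀ s, 0 < D s)
    (γstar : ℝ) (hγstar : γstar = univ.inf' univ_nonempty (fun s => N s / D s)) :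
    univ.inf' univ_nonempty (fun s => N s - γstar * D s) = 0 := by
  obtain ⟨s0, -, hs0⟩ := exists_mem_eq_inf' (univ_nonempty (α := S)) (fun s => N s / D s)
  apply le_antisymm
  · calc univ.inf' univ_nonempty (fun s => N s - γstar * D s) ≤ N s0 - γstar * D s0 :=
          inf'_le _ (mem_univ s0)
      _ = 0 := by
          rw [hγstar, hs0]
          field_simp [(hD s0).ne']
          ring
  · apply le_inf'
    intro s _
    have h1 : γstar ≤ N s / D s := by
      rw [hγstar]; exact inf'_le _ (mem_univ s)
    have h2 : γstar * D s ≤ N s := by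
      exact (le_div_iff₀ (hD s)).mp h1
    linarith
end

section
/- (Dinkelbach's equivalence, Lemma 1 in finite-policy form) A policy s ∈ S satisfies N s / D s = γ* if and only if s minimizes the parametric objective at γ*, i.e., if and only if N s − γ* · D s ≤ N t − γ* · D t for all t ∈ S. In other words, the minimizers of the fractional problem min_{s ∈ S} N s / D s coincide with the minimizers of the Dinkelbach-reformulated problem min_{s ∈ S} (N s − γ* · D s). -/
open Finset

/-- Dinkelbach's equivalence, Lemma 1 in finite-policy form:
N s / D s = γ* iff s minimizes the parametric objective at γ*. -/
theorem dinkelbach_equivalence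
    {S : Type*} [Fintype S] [Nonempty S] (N D : S → ℝ) (hD : ∀ s, 0 < D s)
    (γstar : ℝ) (hγstar : γstar = univ.inf' univ_nonempty (fun s => N s / D s))
    (s : S) :
    N s / D s = γstar ↔ ∀ t : S, N s - γstar * D s ≤ N t - γstar * D t := by
  have hle : ∀ t : S, γstar ≤ N t / D t := by
    intro t
    rw [hγstar]
    exact inf'_le _ (mem_univ t)
  have hnn : ∀ t : S, 0 ≤ N t - γstar * D t := by
    intro t
    have := (le_div_iff₀ (hD t)).mp (hle t)
    linarith
  obtain ⟨m, _, hm⟩ := exists_mem_eq_inf' (univ_nonempty (α := S)) (fun s => N s / D s)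
  have hmeq : N m / D m = γstar := by rw [hγstar, hm]
  have hmzero : N m - γstar * D m = 0 := by
    have := (div_eq_iff (hD m).ne').mp hmeq
    linarith
  constructor
  · intro h t
    have : N s - γstar * D s = 0 := by
      have := (div_eq_iff (hD s).ne').mp h
      linarith
    linarith [hnn t]
  · intro h
    have h0 : N s - γstar * D s ≤ 0 := hmzero ▸ h m
    have : N s - γstar * D s = 0 := le_antisymm h0 (hnn s)
    rw [div_eq_iff (hD s).ne']
    linarith
end

section
/- For every γ ∈ ℝ the sign of F(γ) determines the position of γ relative to γ*: F(γ) > 0 if and only if γ < γ*; F(γ) = 0 if and only if γ = γ*; and F(γ) < 0 if and only if γ > γ*. In particular, γ* is the unique zero of F. -/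
open Finset

/-- the sign of F(γ) determines the position of γ relative to γ*;
in particular γ* is the unique zero of F. -/
theorem dinkelbach_sign_trichotomy
    {S : Type*} [Fintype S] [Nonempty S] (N D : S → ℝ) (hD : ∀ s, 0 < D s)
    (γstar : ℝ) (hγstar : γstar = univ.inf' univ_nonempty (fun s => N s / D s))
    (F : ℝ → ℝ) (hF : ∀ γ, F γ = univ.inf' univ_nonempty (fun s => N s - γ * D s)) :
    ∀ γ : ℝ, (0 < F γ ↔ γ < γstar) ∧ (F γ = 0 ↔ γ = γstar) ∧ (F γ < 0 ↔ γstar < γ) := by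
  intro γ
  have h1 : (0 < F γ) ↔ γ < γstar := by
    rw [hF, hγstar, lt_inf'_iff, lt_inf'_iff]
    constructor
    · intro h s hs
      have := h s hs
      rw [lt_div_iff₀ (hD s)]; linarith
    · intro h s hs
      have := h s hs
      rw [lt_div_iff₀ (hD s)] at this; linarith
  have h2 : (F γ < 0) ↔ γstar < γ := by
    rw [hF, hγstar, inf'_lt_iff, inf'_lt_iff]
    constructor
    · rintro ⟨s, hs, h⟩; exact ⟨s, hs, by rw [div_lt_iff₀ (hD s)]; linarith⟩
    · rintro ⟨s, hs, h⟩; rw [div_lt_iff₀ (hD s)] at h; exact ⟨s, hs, by linarith⟩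
  refine ⟨h1, ?_, h2⟩
  constructor
  · intro h; by_contra hne
    rcases lt_or_gt_of_ne hne with hlt|hgt
    · have := h1.2 hlt; linarith
    · have := h2.2 hgt; linarith
  · intro h; subst h; by_contra hne
    rcases lt_or_gt_of_ne hne with hlt|hgt
    · exact absurd (h2.1 hlt) (lt_irrefl _)
    · exact absurd (h1.1 hgt) (lt_irrefl _)
end

section
/- (Exact Dinkelbach iteration is monotone) Suppose γ > γ* and s ∈ S minimizes the parametric objective at γ, i.e., N s − γ · D s = F(γ). Then the updated quotient γ⁺ := N s / D s satisfies γ* ≤ γ⁺ < γ. -/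
open Finset

/-- exact Dinkelbach iteration is monotone: if γ > γ* and s minimizes
the parametric objective at γ, then γ* ≤ N s / D s < γ. -/
theorem dinkelbach_iteration_monotone
    {S : Type*} [Fintype S] [Nonempty S] (N D : S → ℝ) (hD : ∀ s, 0 < D s)
    (γstar : ℝ) (hγstar : γstar = univ.inf' univ_nonempty (fun s => N s / D s))
    (F : ℝ → ℝ) (hF : ∀ γ, F γ = univ.inf' univ_nonempty (fun s => N s - γ * D s))
    (γ : ℝ) (hγ : γstar < γ) (s : S) (hs : N s - γ * D s = F γ) :
    γstar ≤ N s / D s ∧ N s / D s < γ := by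
  constructor
  · rw [hγstar]
    exact inf'_le _ (mem_univ s)
  · -- obtain a minimizer t of N/D
    obtain ⟨t, -, ht⟩ := exists_mem_eq_inf' (univ_nonempty (α := S)) (fun s => N s / D s)
    have htq : N t / D t = γstar := by rw [hγstar, ht]
    have hDt := hD t
    have h1 : N t - γ * D t < 0 := by
      have : N t / D t < γ := htq ▸ hγ
      have := (div_lt_iff₀ hDt).mp this
      linarith
    have h2 : N s - γ * D s ≤ N t - γ * D t := by
      rw [hs, hF]
      exact inf'_le _ (mem_univ t)
    have h3 : N s - γ * D s < 0 := lt_of_le_of_lt h2 h1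
    rw [div_lt_iff₀ (hD s)]
    linarith
end

section
/- (Exact Dinkelbach contraction inequality) Suppose s ∈ S minimizes the parametric objective at γ ∈ ℝ, i.e., N s − γ · D s = F(γ), and s* ∈ S attains the optimal quotient, i.e., N s* / D s* = γ*. Then N s / D s − γ* ≤ (γ − γ*) · (1 − D s* / D s). -/
open Finset

/-- exact Dinkelbach contraction inequality. -/
theorem dinkelbach_contraction_ineq
    {S : Type*} [Fintype S] [Nonempty S] (N D : S → ℝ) (hD : ∀ s, 0 < D s)
    (γstar : ℝ) (hγstar : γstar = univ.inf' univ_nonempty (fun s => N s / D s))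
    (F : ℝ → ℝ) (hF : ∀ γ, F γ = univ.inf' univ_nonempty (fun s => N s - γ * D s))
    (γ : ℝ) (s : S) (hs : N s - γ * D s = F γ)
    (sstar : S) (hsstar : N sstar / D sstar = γstar) :
    N s / D s - γstar ≤ (γ - γstar) * (1 - D sstar / D s) := by
  have hle : N s - γ * D s ≤ N sstar - γ * D sstar := by
    rw [hs, hF]
    exact inf'_le _ (mem_univ sstar)
  have hNs : N sstar = γstar * D sstar := by
    have := (div_eq_iff (ne_of_gt (hD sstar))).mp hsstar
    linarith
  have hDs := hD s
  have hDss := hD sstar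
  rw [div_sub' (ne_of_gt hDs), div_le_iff₀ hDs]
  have : (γ - γstar) * (1 - D sstar / D s) * D s
      = (γ - γstar) * (D s - D sstar) := by
    field_simp
  rw [this]
  nlinarith [hle, hNs]
end

section
/- (Linear convergence of the exact Dinkelbach iteration) Let D_min, D_max ∈ ℝ satisfy 0 < D_min ≤ D s ≤ D_max for all s ∈ S. Let γ : ℕ → ℝ and s : ℕ → S be sequences such that γ 0 ≥ γ*, and for every k, N (s k) − (γ k) · D (s k) = F(γ k) and γ (k+1) = N (s k) / D (s k). Then for every k, 0 ≤ γ k − γ* ≤ (γ 0 − γ*) · (1 − D_min / D_max)^k; in particular γ k converges to γ*. -/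
open Finset Filter

/-- linear convergence of the exact Dinkelbach iteration. -/
theorem dinkelbach_linear_convergence
    {S : Type*} [Fintype S] [Nonempty S] (N D : S → ℝ) (hD : ∀ s, 0 < D s)
    (γstar : ℝ) (hγstar : γstar = univ.inf' univ_nonempty (fun s => N s / D s))
    (F : ℝ → ℝ) (hF : ∀ γ, F γ = univ.inf' univ_nonempty (fun s => N s - γ * D s))
    (Dmin Dmax : ℝ) (hDmin : 0 < Dmin) (hbound : ∀ s : S, Dmin ≤ D s ∧ D s ≤ Dmax)
    (γ : ℕ → ℝ) (s : ℕ → S) (hγ0 : γstar ≤ γ 0)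
    (hmin : ∀ k, N (s k) - γ k * D (s k) = F (γ k))
    (hupd : ∀ k, γ (k + 1) = N (s k) / D (s k)) :
    (∀ k, 0 ≤ γ k - γstar ∧ γ k - γstar ≤ (γ 0 - γstar) * (1 - Dmin / Dmax) ^ k) ∧
      Tendsto γ atTop (nhds γstar) := by
  have hDmax : 0 < Dmax := lt_of_lt_of_le hDmin (le_trans (hbound (Classical.arbitrary S)).1
    (hbound (Classical.arbitrary S)).2)
  set r : ℝ := 1 - Dmin / Dmax with hr
  have hr0 : 0 ≤ r := by
    have h1 : Dmin / Dmax ≤ 1 := by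
      rw [div_le_one hDmax]
      exact le_trans (hbound (Classical.arbitrary S)).1 (hbound (Classical.arbitrary S)).2
    rw [hr]; linarith
  have hr1 : r < 1 := by
    have : 0 < Dmin / Dmax := div_pos hDmin hDmax
    simp only [hr]; linarith
  -- γ* ≤ N t / D t for all t
  have hlow : ∀ t : S, γstar ≤ N t / D t := fun t => by
    rw [hγstar]; exact inf'_le _ (mem_univ t)
  -- a minimizer t* of the quotient
  obtain ⟨t, -, ht⟩ := exists_mem_eq_inf' (univ_nonempty (α := S)) (fun s => N s / D s)
  have htq : γstar = N t / D t := by rw [hγstar, ht]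
  have htN : γstar * D t = N t := by
    rw [htq, div_mul_cancel₀ _ (hD t).ne']
  -- γ* ≤ γ k for all k
  have hge : ∀ k, γstar ≤ γ k := by
    intro k
    cases k with
    | zero => exact hγ0
    | succ n => rw [hupd n]; exact hlow (s n)
  -- contraction step
  have hstep : ∀ k, γ (k + 1) - γstar ≤ (γ k - γstar) * r := by
    intro k
    have hFle : F (γ k) ≤ N t - γ k * D t := by
      rw [hF]; exact inf'_le _ (mem_univ t)
    have hkey : N (s k) - γ k * D (s k) ≤ (γstar - γ k) * D t := by
      have := hmin k
      nlinarith [hFle, htN]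
    have hdk : 0 < D (s k) := hD (s k)
    have h1 : γ (k + 1) - γstar ≤ (γ k - γstar) * (1 - D t / D (s k)) := by
      rw [hupd k]
      rw [div_sub' hdk.ne', div_le_iff₀ hdk]
      have hexp : (γ k - γstar) * (1 - D t / D (s k)) * D (s k)
          = (γ k - γstar) * (D (s k) - D t) := by
        field_simp
      rw [hexp]
      nlinarith [hkey]
    have h2 : Dmin / Dmax ≤ D t / D (s k) := by
      apply div_le_div₀ (hD t).le (hbound t).1 hdk
      exact (hbound (s k)).2
    have ha : 0 ≤ γ k - γstar := by linarith [hge k]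
    calc γ (k + 1) - γstar ≤ (γ k - γstar) * (1 - D t / D (s k)) := h1
      _ ≤ (γ k - γstar) * r := by
          apply mul_le_mul_of_nonneg_left _ ha
          simp only [hr]; linarith
  have hbd : ∀ k, 0 ≤ γ k - γstar ∧ γ k - γstar ≤ (γ 0 - γstar) * r ^ k := by
    intro k
    induction k with
    | zero => constructor <;> simp [hγ0]
    | succ n ih =>
      refine ⟨by linarith [hge (n + 1)], ?_⟩
      calc γ (n + 1) - γstar ≤ (γ n - γstar) * r := hstep n
        _ ≤ (γ 0 - γstar) * r ^ n * r := mul_le_mul_of_nonneg_right ih.2 hr0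
        _ = (γ 0 - γstar) * r ^ (n + 1) := by ring
  refine ⟨hbd, ?_⟩
  have hgeo : Tendsto (fun k => (γ 0 - γstar) * r ^ k) atTop (nhds 0) := by
    have := tendsto_pow_atTop_nhds_zero_of_lt_one hr0 hr1
    simpa using this.const_mul (γ 0 - γstar)
  have hz : Tendsto (fun k => γ k - γstar) atTop (nhds 0) :=
    squeeze_zero (fun k => (hbd k).1) (fun k => (hbd k).2) hgeo
  have := hz.add_const γstar
  simpa using this
end

section
/- (Key inequality of the convergence proof, Eq. (Proof-Eq1)) Let γ_i ∈ ℝ, s_i ∈ S and ε_i ≥ 0 be such that s_i is an ε_i-approximate minimizer at γ_i, i.e., N s_i − γ_i · D s_i ≤ F(γ_i) + ε_i. Then for every γ' ∈ ℝ and every s' ∈ S with N s' − γ' · D s' = F(γ'), writing D' := D s', D_i := D s_i, one has N s' / D' − N s_i / D_i ≥ (−F(γ') + (γ_i − γ') · D') · (1/D_i − 1/D') − ε_i / D_i. -/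
open Finset

/-- key inequality of the convergence proof, Eq. (Proof-Eq1). -/
theorem dinkelbach_key_inequality
    {S : Type*} [Fintype S] [Nonempty S] (N D : S → ℝ) (hD : ∀ s, 0 < D s)
    (γstar : ℝ) (hγstar : γstar = univ.inf' univ_nonempty (fun s => N s / D s))
    (F : ℝ → ℝ) (hF : ∀ γ, F γ = univ.inf' univ_nonempty (fun s => N s - γ * D s))
    (γi : ℝ) (si : S) (εi : ℝ) (hεi : 0 ≤ εi)
    (happrox : N si - γi * D si ≤ F γi + εi)
    (γ' : ℝ) (s' : S) (hs' : N s' - γ' * D s' = F γ') :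
    N s' / D s' - N si / D si ≥
      (-(F γ') + (γi - γ') * D s') * (1 / D si - 1 / D s') - εi / D si := by
  have hDi := hD si
  have hD' := hD s'
  have h1 : F γi ≤ N s' - γi * D s' := by
    rw [hF]
    exact inf'_le _ (mem_univ s')
  have h2 : N si ≤ N s' - γi * D s' + γi * D si + εi := by linarith
  rw [← hs', ge_iff_le]
  have key : (-(N s' - γ' * D s') + (γi - γ') * D s') * (1 / D si - 1 / D s') - εi / D si
      = (γi * D s' - N s') * (1/ D si) - (γi * D s' - N s') * (1 / D s') - εi / D si := by ring
  rw [key, div_sub_div _ _ (ne_of_gt hD') (ne_of_gt hDi)]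
  rw [show (γi * D s' - N s') * (1 / D si) - (γi * D s' - N s') * (1 / D s') - εi / D si
      = ((γi * D s' - N s') * D s' - (γi * D s' - N s') * D si - εi * D s') / (D si * D s') by
    field_simp]
  rw [div_le_div_iff₀ (by positivity) (by positivity)]
  nlinarith [mul_le_mul_of_nonneg_right h2 hD'.le, mul_pos hDi hD']
end

section
/- (Lower bound on the optimality gap under the stopping condition) Let α ∈ (0,1), γ_i ∈ ℝ, s_i ∈ S, and ε_i ∈ ℝ with 0 ≤ ε_i ≤ −α · Q_i, where Q_i := N s_i − γ_i · D s_i and Q_i < 0. Then γ_i − γ* ≥ −Q_i / D s_i ≥ ε_i / (α · D s_i). -/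
open Finset

/-- lower bound on the optimality gap under the stopping condition. -/
theorem dinkelbach_gap_lower_bound
    {S : Type*} [Fintype S] [Nonempty S] (N D : S → ℝ) (hD : ∀ s, 0 < D s)
    (γstar : ℝ) (hγstar : γstar = univ.inf' univ_nonempty (fun s => N s / D s))
    (α : ℝ) (hα : 0 < α) (hα1 : α < 1)
    (γi : ℝ) (si : S) (εi : ℝ)
    (hQneg : N si - γi * D si < 0)
    (hε0 : 0 ≤ εi) (hεstop : εi ≤ -α * (N si - γi * D si)) :
    γi - γstar ≥ -(N si - γi * D si) / D si ∧
      -(N si - γi * D si) / D si ≥ εi / (α * D si) := by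
  have hDpos := hD si
  constructor
  · have h1 : γstar ≤ N si / D si := by
      rw [hγstar]
      exact inf'_le _ (mem_univ si)
    have : -(N si - γi * D si) / D si = γi - N si / D si := by
      field_simp
      ring
    rw [this]
    linarith
  · rw [ge_iff_le, div_le_div_iff₀ (by positivity) hDpos]
    have : εi * D si ≤ -α * (N si - γi * D si) * D si := by
      apply mul_le_mul_of_nonneg_right hεstop hDpos.le
    nlinarith
end

section
/- (Recursive error bound of the inexact Dinkelbach update) Let γ_i ∈ ℝ, s_i ∈ S, ε_i ≥ 0 with N s_i − γ_i · D s_i ≤ F(γ_i) + ε_i, and let s* ∈ S attain the optimal quotient, i.e., N s* / D s* = γ*. Then the updated quotient γ_{i+1} := N s_i / D s_i satisfies γ_{i+1} − γ* ≤ (γ_i − γ*) · (1 − D s* / D s_i) + ε_i / D s_i. -/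
open Finset

/-- recursive error bound of the inexact Dinkelbach update. -/
theorem dinkelbach_recursive_error_bound
    {S : Type*} [Fintype S] [Nonempty S] (N D : S → ℝ) (hD : ∀ s, 0 < D s)
    (γstar : ℝ) (hγstar : γstar = univ.inf' univ_nonempty (fun s => N s / D s))
    (F : ℝ → ℝ) (hF : ∀ γ, F γ = univ.inf' univ_nonempty (fun s => N s - γ * D s))
    (γi : ℝ) (si : S) (εi : ℝ) (hεi : 0 ≤ εi)
    (happrox : N si - γi * D si ≤ F γi + εi)
    (sstar : S) (hsstar : N sstar / D sstar = γstar) :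
    N si / D si - γstar ≤ (γi - γstar) * (1 - D sstar / D si) + εi / D si := by
  have hFle : F γi ≤ N sstar - γi * D sstar := by
    rw [hF]
    exact inf'_le _ (mem_univ sstar)
  have hNs : N sstar = γstar * D sstar := by
    have h := (div_eq_iff (hD sstar).ne').mp hsstar
    linarith
  have hkey : N si - γstar * D si ≤ (γi - γstar) * (D si - D sstar) + εi := by
    nlinarith [happrox, hFle]
  have hDi := hD si
  have h1 : N si / D si - γstar = (N si - γstar * D si) / D si := by
    field_simp
  have h2 : (γi - γstar) * (1 - D sstar / D si) + εi / D si
      = ((γi - γstar) * (D si - D sstar) + εi) / D si := by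
    field_simp
  rw [h1, h2]
  gcongr
end

section
/- (Recursive bound under the stopping condition) Let α ∈ (0,1), γ_i ∈ ℝ, s_i ∈ S, and ε_i ∈ ℝ be such that N s_i − γ_i · D s_i ≤ F(γ_i) + ε_i and 0 ≤ ε_i ≤ −α · (N s_i − γ_i · D s_i), and let s* ∈ S attain the optimal quotient, i.e., N s* / D s* = γ*. Then the updated quotient γ_{i+1} := N s_i / D s_i satisfies γ_{i+1} − γ* ≤ (γ_i − γ*) · (1 + α − D s* / D s_i). -/
open Finset

/-- recursive bound under the stopping condition. -/
theorem dinkelbach_recursive_bound_stopping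
    {S : Type*} [Fintype S] [Nonempty S] (N D : S → ℝ) (hD : ∀ s, 0 < D s)
    (γstar : ℝ) (hγstar : γstar = univ.inf' univ_nonempty (fun s => N s / D s))
    (F : ℝ → ℝ) (hF : ∀ γ, F γ = univ.inf' univ_nonempty (fun s => N s - γ * D s))
    (α : ℝ) (hα : 0 < α) (hα1 : α < 1)
    (γi : ℝ) (si : S) (εi : ℝ)
    (happrox : N si - γi * D si ≤ F γi + εi)
    (hε0 : 0 ≤ εi) (hεstop : εi ≤ -α * (N si - γi * D si))
    (sstar : S) (hsstar : N sstar / D sstar = γstar) :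
    N si / D si - γstar ≤ (γi - γstar) * (1 + α - D sstar / D si) := by
  have hDsi := hD si
  have hDss := hD sstar
  have h1 : γstar ≤ N si / D si := by
    rw [hγstar]
    exact inf'_le _ (mem_univ si)
  have h2 : F γi ≤ N sstar - γi * D sstar := by
    rw [hF γi]
    exact inf'_le _ (mem_univ sstar)
  have hNs : N sstar = γstar * D sstar := by
    field_simp at hsstar; linarith
  have hNsi : N si = (N si / D si) * D si := (div_mul_cancel₀ _ hDsi.ne').symm
  rw [show (1 + α - D sstar / D si) = ((1 + α) * D si - D sstar) / D si by
      field_simp, ← mul_div_assoc, le_div_iff₀ hDsi]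
  nlinarith [mul_nonneg (mul_nonneg hα.le hDsi.le) (sub_nonneg.2 h1)]
end

section
/- (Lemma 2, asymptotic equivalence of the average-cost and discounted formulations; Frobenius/Abelian theorem) Let c : ℕ → ℝ be a bounded sequence and L ∈ ℝ. If the Cesàro averages converge, i.e., (1/n) · Σ_{k=0}^{n−1} c k → L as n → ∞, then the normalized discounted sums converge to the same limit as the discount factor tends to 1 from below: the function δ ↦ (1 − δ) · Σ_{k=0}^{∞} δ^k · c k (for δ ∈ (0,1), where the series converges absolutely since c is bounded) tends to L as δ → 1⁻. -/
open Filter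

lemma aux_geom_n_sum {x : ℝ} (hx0 : 0 < x) (hx1 : x < 1) :
    Summable (fun n : ℕ => ((n : ℝ) + 1) * x ^ n) := by
  have h1 : Summable (fun n : ℕ => (n : ℝ) * x ^ n) := by
    have := summable_pow_mul_geometric_of_norm_lt_one (R := ℝ) 1
      (r := x) (by rw [Real.norm_eq_abs, abs_of_pos hx0]; exact hx1)
    simpa using this
  have h2 : Summable (fun n : ℕ => x ^ n) :=
    summable_geometric_of_lt_one hx0.le hx1
  exact (h1.add h2).congr (fun n => by ring)

lemma aux_geom_n_tsum {x : ℝ} (hx0 : 0 < x) (hx1 : x < 1) :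
    ∑' n : ℕ, ((n : ℝ) + 1) * x ^ n = 1 / (1 - x) ^ 2 := by
  have h1 : Summable (fun n : ℕ => (n : ℝ) * x ^ n) := by
    have := summable_pow_mul_geometric_of_norm_lt_one (R := ℝ) 1
      (r := x) (by rw [Real.norm_eq_abs, abs_of_pos hx0]; exact hx1)
    simpa using this
  have h2 : Summable (fun n : ℕ => x ^ n) :=
    summable_geometric_of_lt_one hx0.le hx1
  have heq : ∀ n : ℕ, ((n : ℝ) + 1) * x ^ n = (n : ℝ) * x ^ n + x ^ n := by
    intro n; ring
  rw [tsum_congr heq, Summable.tsum_add h1 h2,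
    tsum_coe_mul_geometric_of_norm_lt_one
      (by rw [Real.norm_eq_abs, abs_of_pos hx0]; exact hx1),
    tsum_geometric_of_lt_one hx0.le hx1]
  have hne : (1 : ℝ) - x ≠ 0 := by linarith
  field_simp
  ring

lemma aux_summable_abs {x : ℝ} (hx0 : 0 < x) (hx1 : x < 1) {u : ℕ → ℝ} {B : ℝ}
    (hu : ∀ n, |u n| ≤ B * ((n : ℝ) + 1)) :
    Summable (fun n : ℕ => |x ^ n * u n|) := by
  have hle : ∀ n : ℕ, |x ^ n * u n| ≤ B * (((n:ℝ)+1) * x ^ n) := by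
    intro n
    rw [abs_mul, abs_pow, abs_of_pos hx0]
    calc x ^ n * |u n| ≤ x ^ n * (B * ((n:ℝ)+1)) := by
          apply mul_le_mul_of_nonneg_left (hu n) (pow_nonneg hx0.le n)
      _ = B * (((n:ℝ)+1) * x ^ n) := by ring
  exact Summable.of_nonneg_of_le (fun n => abs_nonneg _) hle
    ((aux_geom_n_sum hx0 hx1).mul_left B)

set_option maxHeartbeats 1000000 in
/-- Lemma 2, asymptotic equivalence of the average-cost and discounted
formulations; Frobenius/Abelian theorem: if the Cesàro averages of a bounded sequence
converge to L, then the normalized discounted sums tend to L as δ → 1⁻. -/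
theorem abelian_discounted_of_cesaro
    (c : ℕ → ℝ) (M : ℝ) (hbdd : ∀ k, |c k| ≤ M) (L : ℝ)
    (hcesaro : Tendsto (fun n : ℕ => (1 / (n : ℝ)) * ∑ k ∈ Finset.range n, c k)
      atTop (nhds L)) :
    Tendsto (fun δ : ℝ => (1 - δ) * ∑' k : ℕ, δ ^ k * c k)
      (nhdsWithin 1 (Set.Ioo 0 1)) (nhds L) := by
  set d : ℕ → ℝ := fun k => c k - L with hd_def
  set T : ℕ → ℝ := fun n => ∑ k ∈ Finset.range n, d k with hT_def
  set B : ℝ := M + |L| with hB_def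
  have hM0 : 0 ≤ M := le_trans (abs_nonneg _) (hbdd 0)
  have hB0 : 0 ≤ B := by positivity
  have hdB : ∀ k, |d k| ≤ B := by
    intro k
    calc |d k| ≤ |c k| + |L| := abs_sub _ _
      _ ≤ M + |L| := by linarith [hbdd k]
  have hcB : ∀ k, |c k| ≤ B * ((k : ℝ) + 1) := by
    intro k
    have h1 : (1 : ℝ) ≤ (k : ℝ) + 1 := by
      have := Nat.cast_nonneg (α := ℝ) k; linarith
    calc |c k| ≤ M := hbdd k
      _ ≤ B * 1 := by rw [mul_one, hB_def]; linarith [abs_nonneg L]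
      _ ≤ B * ((k : ℝ) + 1) := by nlinarith
  have hTB : ∀ n : ℕ, |T n| ≤ B * (n : ℝ) := by
    intro n
    calc |T n| ≤ ∑ k ∈ Finset.range n, |d k| := Finset.abs_sum_le_sum_abs _ _
      _ ≤ ∑ _k ∈ Finset.range n, B := Finset.sum_le_sum (fun k _ => hdB k)
      _ = B * (n : ℝ) := by simp [mul_comm]
  have hTB' : ∀ n : ℕ, |T (n + 1)| ≤ B * ((n : ℝ) + 1) := by
    intro n
    have := hTB (n + 1)
    simpa [Nat.cast_add] using this
  have hTB'' : ∀ n : ℕ, |T n| ≤ B * ((n : ℝ) + 1) := by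
    intro n
    refine le_trans (hTB n) ?_
    nlinarith [Nat.cast_nonneg (α := ℝ) n]
  -- Cesàro convergence of T
  have hT0 : Tendsto (fun n : ℕ => |T (n + 1)| / ((n : ℝ) + 1)) atTop (nhds 0) := by
    have h1 : Tendsto (fun n : ℕ => (1 / (n : ℝ)) * T n) atTop (nhds 0) := by
      have h2 := hcesaro.sub_const L
      rw [sub_self] at h2
      apply h2.congr'
      filter_upwards [eventually_ge_atTop 1] with n hn
      have hn0 : (n : ℝ) ≠ 0 := by
        simp only [ne_eq, Nat.cast_eq_zero]; omega
      simp only [hT_def, hd_def, Finset.sum_sub_distrib, Finset.sum_const,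
        Finset.card_range, nsmul_eq_mul]
      field_simp
    have h3 : Tendsto (fun n : ℕ => (1 / ((n : ℝ) + 1)) * T (n + 1)) atTop (nhds 0) := by
      have h5 : Tendsto (fun n : ℕ => (1 / ((n + 1 : ℕ) : ℝ)) * T (n + 1)) atTop (nhds 0) :=
        (tendsto_add_atTop_iff_nat 1).2 h1
      refine h5.congr fun n => ?_
      push_cast
      ring
    have h4 := h3.abs
    rw [abs_zero] at h4
    apply h4.congr
    intro n
    have hpos : (0 : ℝ) < (n : ℝ) + 1 := by positivity
    rw [abs_mul, abs_of_pos (by positivity : (0:ℝ) < 1 / ((n:ℝ)+1))]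
    ring
  -- Key limit
  have hmain : Tendsto (fun x : ℝ => (1 - x) ^ 2 * ∑' n : ℕ, x ^ n * T (n + 1))
      (nhdsWithin 1 (Set.Ioo 0 1)) (nhds 0) := by
    rw [Metric.tendsto_nhdsWithin_nhds]
    intro ε hε
    -- choose N
    have hev : ∀ᶠ n : ℕ in atTop, |T (n + 1)| / ((n : ℝ) + 1) < ε / 4 := by
      have := hT0 (Iio_mem_nhds (by positivity : (0:ℝ) < ε / 4))
      simpa using this
    obtain ⟨N, hN⟩ := hev.exists_forall_of_atTop
    have hNbd : ∀ n, N ≤ n → |T (n + 1)| ≤ (ε / 4) * ((n : ℝ) + 1) := by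
      intro n hn
      have := hN n hn
      have hpos : (0 : ℝ) < (n : ℝ) + 1 := by positivity
      rw [div_lt_iff₀ hpos] at this
      linarith
    set C : ℝ := ∑ n ∈ Finset.range N, |T (n + 1)| with hC_def
    have hC0 : 0 ≤ C := Finset.sum_nonneg (fun n _ => abs_nonneg _)
    refine ⟨min 1 (ε / (2 * (C + 1))), by positivity, ?_⟩
    intro x hx hdist
    obtain ⟨hx0, hx1⟩ := hx
    have hx1' : (0 : ℝ) < 1 - x := by linarith
    have hdx : dist x 1 = 1 - x := by
      rw [Real.dist_eq, abs_of_neg (by linarith : x - 1 < 0)]; ring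
    rw [hdx] at hdist
    have hd1 : 1 - x < 1 := lt_of_lt_of_le hdist (min_le_left _ _)
    have hd2 : 1 - x < ε / (2 * (C + 1)) := lt_of_lt_of_le hdist (min_le_right _ _)
    -- summabilities
    have hsf : Summable (fun n : ℕ => |x ^ n * T (n + 1)|) :=
      aux_summable_abs hx0 hx1 hTB'
    have hh : Summable (fun n : ℕ => ((n : ℝ) + 1) * x ^ n) := aux_geom_n_sum hx0 hx1
    -- bound the tsum
    have hsplit := Summable.sum_add_tsum_nat_add (f := fun n => |x ^ n * T (n + 1)|) N hsf
    have hxpow : ∀ n : ℕ, x ^ n ≤ 1 := fun n => pow_le_one₀ hx0.le hx1.le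
    have hhead : ∑ n ∈ Finset.range N, |x ^ n * T (n + 1)| ≤ C := by
      apply Finset.sum_le_sum
      intro n _
      rw [abs_mul, abs_pow, abs_of_pos hx0]
      calc x ^ n * |T (n + 1)| ≤ 1 * |T (n + 1)| := by
            apply mul_le_mul_of_nonneg_right (hxpow n) (abs_nonneg _)
        _ = |T (n + 1)| := one_mul _
    have htailsum : Summable (fun n : ℕ => |x ^ (n + N) * T (n + N + 1)|) :=
      (summable_nat_add_iff N).2 hsf
    have hhshift : Summable (fun n : ℕ => (((n + N : ℕ) : ℝ) + 1) * x ^ (n + N)) :=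
      (summable_nat_add_iff (f := fun n : ℕ => ((n : ℝ) + 1) * x ^ n) N).2 hh
    have htail : ∑' n : ℕ, |x ^ (n + N) * T (n + N + 1)|
        ≤ (ε / 4) * ∑' n : ℕ, ((n : ℝ) + 1) * x ^ n := by
      have step1 : ∑' n : ℕ, |x ^ (n + N) * T (n + N + 1)|
          ≤ ∑' n : ℕ, (ε / 4) * ((((n + N : ℕ) : ℝ) + 1) * x ^ (n + N)) := by
        apply Summable.tsum_le_tsum _ htailsum (hhshift.mul_left (ε / 4))
        intro n
        rw [abs_mul, abs_pow, abs_of_pos hx0]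
        calc x ^ (n + N) * |T (n + N + 1)|
            ≤ x ^ (n + N) * ((ε / 4) * (((n + N : ℕ) : ℝ) + 1)) := by
              apply mul_le_mul_of_nonneg_left _ (pow_nonneg hx0.le _)
              exact hNbd (n + N) (Nat.le_add_left N n)
          _ = (ε / 4) * ((((n + N : ℕ) : ℝ) + 1) * x ^ (n + N)) := by ring
      have step2 : ∑' n : ℕ, (((n + N : ℕ) : ℝ) + 1) * x ^ (n + N)
          ≤ ∑' n : ℕ, ((n : ℝ) + 1) * x ^ n := by
        have hsp := Summable.sum_add_tsum_nat_add (f := fun n : ℕ => ((n : ℝ) + 1) * x ^ n) N hh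
        have hpart : 0 ≤ ∑ n ∈ Finset.range N, ((n : ℝ) + 1) * x ^ n :=
          Finset.sum_nonneg (fun n _ => by positivity)
        linarith
      calc ∑' n : ℕ, |x ^ (n + N) * T (n + N + 1)|
          ≤ ∑' n : ℕ, (ε / 4) * ((((n + N : ℕ) : ℝ) + 1) * x ^ (n + N)) := step1
        _ = (ε / 4) * ∑' n : ℕ, (((n + N : ℕ) : ℝ) + 1) * x ^ (n + N) := by
            rw [tsum_mul_left]
        _ ≤ (ε / 4) * ∑' n : ℕ, ((n : ℝ) + 1) * x ^ n := by
            apply mul_le_mul_of_nonneg_left step2 (by positivity)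
    have habs : |∑' n : ℕ, x ^ n * T (n + 1)| ≤ ∑' n : ℕ, |x ^ n * T (n + 1)| := by
      have h := norm_tsum_le_tsum_norm (f := fun n : ℕ => x ^ n * T (n + 1))
        (by simp only [Real.norm_eq_abs]; exact hsf)
      simp only [Real.norm_eq_abs] at h
      exact h
    have hGval : ∑' n : ℕ, ((n : ℝ) + 1) * x ^ n = 1 / (1 - x) ^ 2 :=
      aux_geom_n_tsum hx0 hx1
    have hbound : |∑' n : ℕ, x ^ n * T (n + 1)| ≤ C + (ε / 4) * (1 / (1 - x) ^ 2) := by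
      rw [← hGval]
      calc |∑' n : ℕ, x ^ n * T (n + 1)| ≤ ∑' n : ℕ, |x ^ n * T (n + 1)| := habs
        _ = (∑ n ∈ Finset.range N, |x ^ n * T (n + 1)|)
            + ∑' n : ℕ, |x ^ (n + N) * T (n + N + 1)| := hsplit.symm
        _ ≤ C + (ε / 4) * ∑' n : ℕ, ((n : ℝ) + 1) * x ^ n := add_le_add hhead htail
    rw [dist_zero_right, Real.norm_eq_abs, abs_mul, abs_of_pos (by positivity : (0:ℝ) < (1-x)^2)]
    have hne : ((1 : ℝ) - x) ^ 2 ≠ 0 := by positivity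
    have hfinal : (1 - x) ^ 2 * |∑' n : ℕ, x ^ n * T (n + 1)|
        ≤ (1 - x) ^ 2 * C + ε / 4 := by
      calc (1 - x) ^ 2 * |∑' n : ℕ, x ^ n * T (n + 1)|
          ≤ (1 - x) ^ 2 * (C + (ε / 4) * (1 / (1 - x) ^ 2)) := by
            apply mul_le_mul_of_nonneg_left hbound (by positivity)
        _ = (1 - x) ^ 2 * C + ε / 4 := by field_simp
    have hsq : (1 - x) ^ 2 * C < ε / 2 := by
      have h1 : (1 - x) ^ 2 ≤ (1 - x) := by nlinarith
      have h2 : (1 - x) ^ 2 * (C + 1) < (ε / (2 * (C + 1))) * (C + 1) := by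
        apply mul_lt_mul_of_pos_right _ (by positivity)
        exact lt_of_le_of_lt h1 hd2
      have h3 : (ε / (2 * (C + 1))) * (C + 1) = ε / 2 := by field_simp
      nlinarith
    linarith
  -- conclude
  have hfin := hmain.add_const L
  rw [zero_add] at hfin
  apply hfin.congr'
  filter_upwards [self_mem_nhdsWithin] with x hx
  obtain ⟨hx0, hx1⟩ := hx
  have hx1' : (0 : ℝ) < 1 - x := by linarith
  have hne : (1 : ℝ) - x ≠ 0 := ne_of_gt hx1'
  -- summabilities
  have hsc : Summable (fun k : ℕ => x ^ k * c k) :=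
    (aux_summable_abs hx0 hx1 hcB).of_abs
  have hsf : Summable (fun n : ℕ => x ^ n * T (n + 1)) :=
    (aux_summable_abs hx0 hx1 hTB').of_abs
  have hsg : Summable (fun n : ℕ => x ^ n * T n) :=
    (aux_summable_abs hx0 hx1 hTB'').of_abs
  have hsgeo : Summable (fun k : ℕ => x ^ k) := summable_geometric_of_lt_one hx0.le hx1
  have hsd : Summable (fun k : ℕ => x ^ k * d k) := by
    have : ∀ k : ℕ, x ^ k * d k = x ^ k * c k - L * x ^ k := by
      intro k; simp only [hd_def]; ring
    exact (hsc.sub (hsgeo.mul_left L)).congr (fun k => (this k).symm)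
  -- key identities
  have hg0 : ∑' n : ℕ, x ^ n * T n = x * ∑' n : ℕ, x ^ n * T (n + 1) := by
    rw [Summable.tsum_eq_zero_add hsg]
    have hT0' : T 0 = 0 := by simp [hT_def]
    rw [hT0']
    have h1 : ∀ n : ℕ, x ^ (n + 1) * T (n + 1) = x * (x ^ n * T (n + 1)) := by
      intro n; ring
    rw [tsum_congr h1, tsum_mul_left]
    ring
  have hfg : ∑' k : ℕ, x ^ k * d k
      = ∑' n : ℕ, x ^ n * T (n + 1) - ∑' n : ℕ, x ^ n * T n := by
    rw [← Summable.tsum_sub hsf hsg]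
    apply tsum_congr
    intro k
    have : T (k + 1) = T k + d k := by simp [hT_def, Finset.sum_range_succ]
    rw [this]; ring
  have hdc : ∑' k : ℕ, x ^ k * d k = ∑' k : ℕ, x ^ k * c k - L * (1 - x)⁻¹ := by
    have h1 : ∀ k : ℕ, x ^ k * d k = x ^ k * c k - L * x ^ k := by
      intro k; simp only [hd_def]; ring
    rw [tsum_congr h1, Summable.tsum_sub hsc (hsgeo.mul_left L), tsum_mul_left,
      tsum_geometric_of_lt_one hx0.le hx1]
  -- combine
  have hkey : ∑' k : ℕ, x ^ k * c k
      = (1 - x) * ∑' n : ℕ, x ^ n * T (n + 1) + L * (1 - x)⁻¹ := by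
    have := hdc
    rw [hfg, hg0] at this
    have h2 : ∑' n : ℕ, x ^ n * T (n + 1) - x * ∑' n : ℕ, x ^ n * T (n + 1)
        = (1 - x) * ∑' n : ℕ, x ^ n * T (n + 1) := by ring
    linarith [h2 ▸ this]
  rw [hkey]
  field_simp
end
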